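/- Let A be a monoidal category, C a left A-module category, and let D, E be right A-module categories. Suppose φ: D → E and ψ: E → D are right-A-linear functors forming an adjunction φ ⊣ ψ. Then the induced functors φ_C: D ⊗_A C → E ⊗_A C and ψ_C: E ⊗_A C → D ⊗_A C on relative tensor products form an adjunction φ_C ⊣ ψ_C. -/

import Mathlib

open CategoryTheory MonoidalCategory

attribute [local instance] CategoryTheory.endofunctorMonoidalCategory

universe v₁ v₂ u₁ u₂

variable {A : Type*} [Category A] [MonoidalCategory A]

/-- An (left) `A`-module category structure on `C`, for a monoidal category `A`:
a strong monoidal functor from `A` to the monoidal category of endofunctors of `C`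
(with composition as tensor product), encoding the action `A × C → C` together with
its coherence data. -/
structure ModAction (A : Type*) [Category A] [MonoidalCategory A]
    (C : Type*) [Category C] where
  act : A ⥤ (C ⥤ C)
  monoidal : act.Monoidal

attribute [instance] ModAction.monoidal

variable {C D E : Type*} [Category C] [Category D] [Category E]

/-- An `A`-linear functor between `A`-module categories: a functor `F` together with
coherent isomorphisms `e a` intertwining the actions, natural in `a` and compatible
with the unit and multiplication coherence of the actions. -/
structure LinFun (ρC : ModAction A C) (ρD : ModAction A D) where
  F : C ⥤ D
  e : ∀ a : A, ρC.act.obj a ⋙ F ≅ F ⋙ ρD.act.obj a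
  naturality : ∀ {a b : A} (f : a ⟶ b),
    Functor.whiskerRight (ρC.act.map f) F ≫ (e b).hom =
      (e a).hom ≫ Functor.whiskerLeft F (ρD.act.map f)
  unit_compat :
    Functor.whiskerRight (Functor.LaxMonoidal.ε ρC.act) F ≫ (e (𝟙_ A)).hom =
      Functor.whiskerLeft F (Functor.LaxMonoidal.ε ρD.act)
  mul_compat : ∀ a b : A,
    Functor.whiskerRight (Functor.LaxMonoidal.μ ρC.act a b) F ≫ (e (a ⊗ b)).hom =
      Functor.whiskerLeft (ρC.act.obj a) (e b).hom ≫
        Functor.whiskerRight (e a).hom (ρD.act.obj b) ≫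
        Functor.whiskerLeft F (Functor.LaxMonoidal.μ ρD.act a b)

/-- The property of a natural transformation between the underlying functors of two
`A`-linear functors of being `A`-linear (compatible with the linearity isomorphisms). -/
def IsLinHom {ρC : ModAction A C} {ρD : ModAction A D} (F G : LinFun ρC ρD)
    (τ : F.F ⟶ G.F) : Prop :=
  ∀ a : A, Functor.whiskerLeft (ρC.act.obj a) τ ≫ (G.e a).hom =
    (F.e a).hom ≫ Functor.whiskerRight τ (ρD.act.obj a)

/-- The category `Fun_A(C, D)` of `A`-linear functors and `A`-linear natural
transformations. -/
instance {ρC : ModAction A C} {ρD : ModAction A D} : Category (LinFun ρC ρD) where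
  Hom F G := { τ : F.F ⟶ G.F // IsLinHom F G τ }
  id F := ⟨𝟙 F.F, by intro a; simp⟩
  comp {F G H} f g := ⟨f.val ≫ g.val, by
    intro a
    rw [Functor.whiskerLeft_comp, Category.assoc, g.2 a, ← Category.assoc,
      f.2 a, Category.assoc, ← Functor.whiskerRight_comp]⟩
  id_comp f := Subtype.ext (Category.id_comp f.val)
  comp_id f := Subtype.ext (Category.comp_id f.val)
  assoc f g h := Subtype.ext (Category.assoc f.val g.val h.val)

/-- The identity `A`-linear functor. -/
def LinFun.id (ρC : ModAction A C) : LinFun ρC ρC where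
  F := 𝟭 C
  e a := Functor.rightUnitor _ ≪≫ (Functor.leftUnitor _).symm
  naturality := by intros; ext X; simp
  unit_compat := by ext X; simp
  mul_compat := by intros; ext X; simp

/-- The composition of `A`-linear functors. -/
def LinFun.comp {ρC : ModAction A C} {ρD : ModAction A D} {ρE : ModAction A E}
    (F : LinFun ρC ρD) (G : LinFun ρD ρE) : LinFun ρC ρE where
  F := F.F ⋙ G.F
  e a := Functor.isoWhiskerRight (F.e a) G.F ≪≫ Functor.isoWhiskerLeft F.F (G.e a)
  naturality := by
    intro a b f
    ext X
    have h1 := NatTrans.congr_app (F.naturality f) X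
    have h2 := NatTrans.congr_app (G.naturality f) (F.F.obj X)
    simp only [NatTrans.comp_app, Functor.comp_obj, Functor.whiskerRight_app, Functor.whiskerLeft_app]
      at h1 h2
    simp only [Functor.comp_obj, Functor.whiskerRight_app, Functor.comp_map, Iso.trans_hom,
      Functor.isoWhiskerRight_hom, Functor.isoWhiskerLeft_hom, NatTrans.comp_app, Functor.whiskerRight_app,
      Functor.whiskerLeft_app, Functor.whiskerLeft_app, Category.assoc]
    rw [← G.F.map_comp_assoc, h1, G.F.map_comp, Category.assoc, h2]
  unit_compat := by
    ext X
    have h1 := NatTrans.congr_app F.unit_compat X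
    have h2 := NatTrans.congr_app G.unit_compat (F.F.obj X)
    simp only [NatTrans.comp_app, Functor.comp_obj, Functor.whiskerRight_app, Functor.whiskerLeft_app]
      at h1 h2
    simp only [Functor.comp_obj, Functor.whiskerRight_app, Functor.comp_map, Iso.trans_hom,
      Functor.isoWhiskerRight_hom, Functor.isoWhiskerLeft_hom, NatTrans.comp_app, Functor.whiskerRight_app,
      Functor.whiskerLeft_app, Category.assoc]
    rw [← G.F.map_comp_assoc, h1, h2]
  mul_compat := by
    intro a b
    ext X
    have h1 := NatTrans.congr_app (F.mul_compat a b) X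
    have h2 := NatTrans.congr_app (G.mul_compat a b) (F.F.obj X)
    simp only [NatTrans.comp_app, Functor.comp_obj, Functor.whiskerRight_app, Functor.whiskerLeft_app]
      at h1 h2
    simp only [Functor.comp_obj, Functor.whiskerRight_app, Functor.comp_map, Iso.trans_hom,
      Functor.isoWhiskerRight_hom, Functor.isoWhiskerLeft_hom, NatTrans.comp_app, Functor.whiskerRight_app,
      Functor.whiskerLeft_app, Category.assoc]
    rw [← G.F.map_comp_assoc, h1, G.F.map_comp, G.F.map_comp, Category.assoc,
      Category.assoc, h2]
    simp only [Functor.map_comp, Category.assoc]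
    erw [(G.e b).hom.naturality_assoc ((F.e a).hom.app X)]
    rfl


section Whiskering

variable {ρC : ModAction A C} {ρD : ModAction A D} {ρE : ModAction A E}

/-- Right whiskering of an `A`-linear natural transformation with an `A`-linear
functor. -/
def whiskerRightLin {F F' : LinFun ρC ρD} (τ : F ⟶ F') (G : LinFun ρD ρE) :
    F.comp G ⟶ F'.comp G :=
  ⟨Functor.whiskerRight τ.val G.F, by
    intro a
    ext X
    have h := NatTrans.congr_app (τ.2 a) X
    simp only [NatTrans.comp_app, Functor.whiskerLeft_app, Functor.whiskerRight_app,
      Functor.comp_obj] at h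
    simp only [LinFun.comp, Iso.trans_hom, NatTrans.comp_app, Functor.whiskerLeft_app,
      Functor.whiskerRight_app, Functor.isoWhiskerRight_hom, Functor.isoWhiskerLeft_hom, Functor.comp_obj,
      Functor.comp_map, Category.assoc]
    rw [← G.F.map_comp_assoc, h, G.F.map_comp, Category.assoc]
    erw [(G.e a).hom.naturality (τ.val.app X)]
    rfl⟩

/-- Left whiskering of an `A`-linear natural transformation with an `A`-linear
functor. -/
def whiskerLeftLin (F : LinFun ρC ρD) {G G' : LinFun ρD ρE} (τ : G ⟶ G') :
    F.comp G ⟶ F.comp G' :=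
  ⟨Functor.whiskerLeft F.F τ.val, by
    intro a
    ext X
    have h := NatTrans.congr_app (τ.2 a) (F.F.obj X)
    simp only [NatTrans.comp_app, Functor.whiskerLeft_app, Functor.whiskerRight_app,
      Functor.comp_obj] at h
    simp only [LinFun.comp, Iso.trans_hom, NatTrans.comp_app, Functor.whiskerLeft_app,
      Functor.whiskerRight_app, Functor.isoWhiskerRight_hom, Functor.isoWhiskerLeft_hom, Functor.comp_obj,
      Functor.comp_map, Category.assoc]
    erw [← τ.val.naturality_assoc ((F.e a).hom.app X), h]⟩

end Whiskering

section StructuralCells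

variable {B : Type*} [Category B]
variable {ρB : ModAction A B} {ρC : ModAction A C} {ρD : ModAction A D}
  {ρE : ModAction A E}

/-- The associator cell for composition of `A`-linear functors (the identity natural
transformation, which is `A`-linear). -/
def assocLin (F : LinFun ρB ρC) (G : LinFun ρC ρD) (H : LinFun ρD ρE) :
    (F.comp G).comp H ⟶ F.comp (G.comp H) :=
  ⟨𝟙 (F.F ⋙ G.F ⋙ H.F), by intro a; ext X; simp [LinFun.comp]⟩

/-- The left unitor cell `id ∘ F ⟶ F` for `A`-linear functors. -/
def leftUnitorLin (F : LinFun ρC ρD) : (LinFun.id ρC).comp F ⟶ F :=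
  ⟨𝟙 F.F, by intro a; ext X; simp [LinFun.comp, LinFun.id]⟩

/-- The right unitor cell `F ∘ id ⟶ F` for `A`-linear functors. -/
def rightUnitorLin (F : LinFun ρC ρD) : F.comp (LinFun.id ρD) ⟶ F :=
  ⟨𝟙 F.F, by intro a; ext X; simp [LinFun.comp, LinFun.id]⟩

end StructuralCells

section Tensor

/-- Pseudofunctorial data for the operation "relative tensor product with a fixed left
`A`-module category `(CC, ρC)`", i.e. `M ↦ M ⊗_A CC`, on a family of right `A`-module
categories `(Cat_ i, ρ i)` (right modules are encoded as left module categories over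
the monoidal opposite): for each `i` a category `T i` standing for `(Cat_ i) ⊗_A CC`,
functorial images of linear functors and of linear natural transformations, unit and
composition comparison isomorphisms, and the pseudofunctor coherence laws (naturality
of the comparisons, associativity, and unitality). This is the functoriality of the
relative tensor product, as provided by the bar construction. -/
structure TensorPseudofunctor {ι : Type*} {Cat_ : ι → Type*} [∀ i, Category (Cat_ i)]
    (ρ : ∀ i, ModAction A (Cat_ i))
    {A₀ CC : Type*} [Category A₀] [MonoidalCategory A₀] [Category CC]
    (ρC : ModAction A₀ CC) where
  T : ι → Type*
  [catT : ∀ i, Category.{v₁} (T i)]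
  map : ∀ {i j : ι}, LinFun (ρ i) (ρ j) ⥤ (T i ⥤ T j)
  unitIso : ∀ i, map.obj (LinFun.id (ρ i)) ≅ 𝟭 (T i)
  compIso : ∀ {i j k : ι} (F : LinFun (ρ i) (ρ j)) (G : LinFun (ρ j) (ρ k)),
    map.obj F ⋙ map.obj G ≅ map.obj (F.comp G)
  compIso_natural_left : ∀ {i j k : ι} {F F' : LinFun (ρ i) (ρ j)} (τ : F ⟶ F')
      (G : LinFun (ρ j) (ρ k)),
    Functor.whiskerRight (map.map τ) (map.obj G) ≫ (compIso F' G).hom =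
      (compIso F G).hom ≫ map.map (whiskerRightLin τ G)
  compIso_natural_right : ∀ {i j k : ι} (F : LinFun (ρ i) (ρ j))
      {G G' : LinFun (ρ j) (ρ k)} (τ : G ⟶ G'),
    Functor.whiskerLeft (map.obj F) (map.map τ) ≫ (compIso F G').hom =
      (compIso F G).hom ≫ map.map (whiskerLeftLin F τ)
  assoc_coherence : ∀ {i j k l : ι} (F : LinFun (ρ i) (ρ j)) (G : LinFun (ρ j) (ρ k))
      (H : LinFun (ρ k) (ρ l)),
    Functor.whiskerRight (compIso F G).hom (map.obj H) ≫ (compIso (F.comp G) H).hom ≫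
        map.map (assocLin F G H) =
      Functor.whiskerLeft (map.obj F) (compIso G H).hom ≫ (compIso F (G.comp H)).hom
  left_unit_coherence : ∀ {i j : ι} (F : LinFun (ρ i) (ρ j)),
    (compIso (LinFun.id (ρ i)) F).hom ≫ map.map (leftUnitorLin F) =
      Functor.whiskerRight (unitIso i).hom (map.obj F)
  right_unit_coherence : ∀ {i j : ι} (F : LinFun (ρ i) (ρ j)),
    (compIso F (LinFun.id (ρ j))).hom ≫ map.map (rightUnitorLin F) =
      Functor.whiskerLeft (map.obj F) (unitIso j).hom

attribute [instance] TensorPseudofunctor.catT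

end Tensor

/-! A pseudofunctor carries adjunctions to adjunctions. The `A`-linearity of the unit and
counit makes `φ ⊣ ψ` an adjunction in the 2-category of `A`-module categories; its image
under `T`, conjugated by the unit and composition comparisons of `T`, is a unit and counit
for `T φ ⊣ T ψ`, and the triangle identities transport along the coherence laws of `T`. -/

section LinearAdjunction

variable {B : Type*} [Category B]
variable {ρB : ModAction A B} {ρC : ModAction A C} {ρD : ModAction A D} {ρE : ModAction A E}

def assocLinIso (F : LinFun ρB ρC) (G : LinFun ρC ρD) (H : LinFun ρD ρE) :
    (F.comp G).comp H ≅ F.comp (G.comp H) where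
  hom := assocLin F G H
  inv := ⟨𝟙 (F.F ⋙ G.F ⋙ H.F), by intro a; ext X; simp [LinFun.comp]⟩
  hom_inv_id := Subtype.ext (Category.comp_id _)
  inv_hom_id := Subtype.ext (Category.comp_id _)

variable {φ : LinFun ρC ρD} {ψ : LinFun ρD ρC} (adj : φ.F ⊣ ψ.F)

def CategoryTheory.Adjunction.unitLin (hunit : IsLinHom (LinFun.id ρC) (φ.comp ψ) adj.unit) :
    LinFun.id ρC ⟶ φ.comp ψ :=
  ⟨adj.unit, hunit⟩

def CategoryTheory.Adjunction.counitLin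
    (hcounit : IsLinHom (ψ.comp φ) (LinFun.id ρD) adj.counit) :
    ψ.comp φ ⟶ LinFun.id ρD :=
  ⟨adj.counit, hcounit⟩

variable (hunit : IsLinHom (LinFun.id ρC) (φ.comp ψ) adj.unit)
  (hcounit : IsLinHom (ψ.comp φ) (LinFun.id ρD) adj.counit)

theorem CategoryTheory.Adjunction.left_triangle_lin :
    whiskerRightLin (adj.unitLin hunit) φ ≫ assocLin φ ψ φ ≫
      whiskerLeftLin φ (adj.counitLin hcounit) ≫ rightUnitorLin φ = leftUnitorLin φ :=
  Subtype.ext <| by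
    show Functor.whiskerRight adj.unit φ.F ≫ 𝟙 _ ≫ Functor.whiskerLeft φ.F adj.counit ≫ 𝟙 _ =
      𝟙 φ.F
    ext X
    simp

theorem CategoryTheory.Adjunction.right_triangle_lin :
    whiskerLeftLin ψ (adj.unitLin hunit) ≫ (assocLinIso ψ φ ψ).inv ≫
      whiskerRightLin (adj.counitLin hcounit) ψ ≫ leftUnitorLin ψ = rightUnitorLin ψ :=
  Subtype.ext <| by
    show Functor.whiskerLeft ψ.F adj.unit ≫ 𝟙 _ ≫ Functor.whiskerRight adj.counit ψ.F ≫ 𝟙 _ =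
      𝟙 ψ.F
    ext X
    simp

end LinearAdjunction

namespace TensorPseudofunctor

variable {ι : Type*} {Cat_ : ι → Type*} [∀ i, Category (Cat_ i)]
  {ρ : ∀ i, ModAction A (Cat_ i)}
  {A₀ CC : Type*} [Category A₀] [MonoidalCategory A₀] [Category CC] {ρC : ModAction A₀ CC}
  (T : TensorPseudofunctor ρ ρC) {i j k l : ι}

theorem whiskerRight_map_map {F F' : LinFun (ρ i) (ρ j)} (τ : F ⟶ F')
    (G : LinFun (ρ j) (ρ k)) :
    Functor.whiskerRight (T.map.map τ) (T.map.obj G) =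
      (T.compIso F G).hom ≫ T.map.map (whiskerRightLin τ G) ≫ (T.compIso F' G).inv := by
  rw [← Category.assoc, Iso.eq_comp_inv, T.compIso_natural_left]

theorem whiskerLeft_map_map (F : LinFun (ρ i) (ρ j)) {G G' : LinFun (ρ j) (ρ k)}
    (τ : G ⟶ G') :
    Functor.whiskerLeft (T.map.obj F) (T.map.map τ) =
      (T.compIso F G).hom ≫ T.map.map (whiskerLeftLin F τ) ≫ (T.compIso F G').inv := by
  rw [← Category.assoc, Iso.eq_comp_inv, T.compIso_natural_right]

theorem whiskerRight_compIso_inv_comp_whiskerLeft_compIso_hom (F : LinFun (ρ i) (ρ j))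
    (G : LinFun (ρ j) (ρ k)) (H : LinFun (ρ k) (ρ l)) :
    Functor.whiskerRight (T.compIso F G).inv (T.map.obj H) ≫
        Functor.whiskerLeft (T.map.obj F) (T.compIso G H).hom =
      (T.compIso (F.comp G) H).hom ≫ T.map.map (assocLin F G H) ≫
        (T.compIso F (G.comp H)).inv := by
  rw [← Functor.isoWhiskerRight_inv, Iso.inv_comp_eq, ← Category.assoc, ← Category.assoc,
    Iso.eq_comp_inv, Category.assoc, Functor.isoWhiskerRight_hom, T.assoc_coherence]

theorem whiskerLeft_compIso_inv_comp_whiskerRight_compIso_hom (F : LinFun (ρ i) (ρ j))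
    (G : LinFun (ρ j) (ρ k)) (H : LinFun (ρ k) (ρ l)) :
    Functor.whiskerLeft (T.map.obj F) (T.compIso G H).inv ≫
        Functor.whiskerRight (T.compIso F G).hom (T.map.obj H) =
      (T.compIso F (G.comp H)).hom ≫ T.map.map (assocLinIso F G H).inv ≫
        (T.compIso (F.comp G) H).inv := by
  rw [← Functor.isoWhiskerLeft_inv, Iso.inv_comp_eq, Functor.isoWhiskerLeft_hom,
    ← reassoc_of% (T.assoc_coherence F G H),
    ← T.map.map_comp_assoc, show assocLin F G H ≫ (assocLinIso F G H).inv = 𝟙 _ from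
      (assocLinIso F G H).hom_inv_id, T.map.map_id, Category.id_comp, Iso.hom_inv_id,
    Category.comp_id]

variable {φ : LinFun (ρ i) (ρ j)} {ψ : LinFun (ρ j) (ρ i)}
  (η : LinFun.id (ρ i) ⟶ φ.comp ψ) (ε : ψ.comp φ ⟶ LinFun.id (ρ j))

def mapAdjunction
    (left_triangle : whiskerRightLin η φ ≫ assocLin φ ψ φ ≫ whiskerLeftLin φ ε ≫
      rightUnitorLin φ = leftUnitorLin φ)
    (right_triangle : whiskerLeftLin ψ η ≫ (assocLinIso ψ φ ψ).inv ≫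
      whiskerRightLin ε ψ ≫ leftUnitorLin ψ = rightUnitorLin ψ) :
    T.map.obj φ ⊣ T.map.obj ψ :=
  Adjunction.mkOfUnitCounit
    { unit := (T.unitIso i).inv ≫ T.map.map η ≫ (T.compIso φ ψ).inv
      counit := (T.compIso ψ φ).hom ≫ T.map.map ε ≫ (T.unitIso j).hom
      left_triangle := by
        simp only [Functor.whiskerRight_comp, Functor.whiskerLeft_comp, Category.assoc]
        rw [show (Functor.associator _ _ _).hom = 𝟙 _ from rfl, Category.id_comp,
          reassoc_of% (T.whiskerRight_compIso_inv_comp_whiskerLeft_compIso_hom φ ψ φ),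
          T.whiskerRight_map_map, T.whiskerLeft_map_map, ← T.right_unit_coherence]
        simp only [Category.assoc, Iso.inv_hom_id_assoc, ← Functor.map_comp]
        rw [left_triangle, T.left_unit_coherence, ← Functor.whiskerRight_comp, Iso.inv_hom_id,
          Functor.whiskerRight_id']
        rfl
      right_triangle := by
        simp only [Functor.whiskerRight_comp, Functor.whiskerLeft_comp, Category.assoc]
        rw [show (Functor.associator _ _ _).inv = 𝟙 _ from rfl, Category.id_comp,
          reassoc_of% (T.whiskerLeft_compIso_inv_comp_whiskerRight_compIso_hom ψ φ ψ),
          T.whiskerLeft_map_map, T.whiskerRight_map_map, ← T.left_unit_coherence]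
        simp only [Category.assoc, Iso.inv_hom_id_assoc, ← Functor.map_comp]
        rw [right_triangle, T.right_unit_coherence, ← Functor.whiskerLeft_comp, Iso.inv_hom_id,
          Functor.whiskerLeft_id']
        rfl }

end TensorPseudofunctor

/-- **Tensoring an adjunction of right `A`-module categories with a left `A`-module
category yields an adjunction.**  Let `A` be a monoidal category, `(Cat_ i, ρ i)` a
family of right `A`-module categories (left modules over the monoidal opposite `Aᴹᵒᵖ`),
`(CC, ρC)` a left `A`-module category, and `T` the (pseudo)functorial relative tensor
product data `M ↦ M ⊗_A CC`.  If `φ : D ⇄ E : ψ` are right-`A`-linear functors forming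
an adjunction in the category of `A`-module categories (the unit and counit are
`A`-linear), then the induced functors `φ_C = T.map φ : D ⊗_A CC ⥤ E ⊗_A CC` and
`ψ_C = T.map ψ` form an adjunction `φ_C ⊣ ψ_C`. -/
theorem stmt4 {A : Type*} [Category A] [MonoidalCategory A]
    {ι : Type*} {Cat_ : ι → Type*} [∀ i, Category (Cat_ i)]
    (ρ : ∀ i, ModAction Aᴹᵒᵖ (Cat_ i))
    {CC : Type*} [Category CC] (ρC : ModAction A CC)
    (T : TensorPseudofunctor ρ ρC)
    {i j : ι} (φ : LinFun (ρ i) (ρ j)) (ψ : LinFun (ρ j) (ρ i)) (adj : φ.F ⊣ ψ.F)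
    (hunit : IsLinHom (LinFun.id (ρ i)) (φ.comp ψ) adj.unit)
    (hcounit : IsLinHom (ψ.comp φ) (LinFun.id (ρ j)) adj.counit) :
    Nonempty (T.map.obj φ ⊣ T.map.obj ψ) :=
  ⟨T.mapAdjunction (adj.unitLin hunit) (adj.counitLin hcounit)
    (adj.left_triangle_lin hunit hcounit) (adj.right_triangle_lin hunit hcounit)⟩
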